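/- arXiv:quant-ph/0107123 — 3 statements merged into one kernel-verified Lean document; each statement's English description precedes it below -/
import Mathlib

section
/- Let L, M, N be complete lattices with N ⊆ M ⊆ L, each closed under infima of the larger, and let G_{ML}, G_{NM}, G_{NL} be the coarse-graining maps defined by infima of upper bounds in the respective sublattices. Then G_{NM} ∘ G_{ML} = G_{NL}; i.e., coarse-graining is transitive, so G defines a presheaf on the poset of sublattices. -/
/-- Transitivity of coarse-graining: for sublattices `N ⊆ M ⊆ L`, each closed under
infima of the larger, with the coarse-graining maps `G_{ML}(p) := inf {q ∈ M : p ≤ q}`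
(etc.) assumed inflationary with infima lying in the relevant sublattice, one has
`G_{NM} ∘ G_{ML} = G_{NL}`. -/
theorem coarseGraining_transitive {L : Type*} [CompleteLattice L] (N M : Set L)
    (hNM : N ⊆ M)
    (hMinf : ∀ S : Set L, S ⊆ M → sInf S ∈ M)
    (hNinf : ∀ S : Set L, S ⊆ N → sInf S ∈ N)
    (hMmem : ∀ p : L, sInf {q | q ∈ M ∧ p ≤ q} ∈ M)
    (hNmem : ∀ p : L, sInf {q | q ∈ N ∧ p ≤ q} ∈ N)
    (hMub : ∀ p : L, p ≤ sInf {q | q ∈ M ∧ p ≤ q})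
    (hNub : ∀ p : L, p ≤ sInf {q | q ∈ N ∧ p ≤ q}) :
    ∀ p : L,
      sInf {q | q ∈ N ∧ sInf {q' | q' ∈ M ∧ p ≤ q'} ≤ q} = sInf {q | q ∈ N ∧ p ≤ q} := by
  intro p
  set m := sInf {q' | q' ∈ M ∧ p ≤ q'} with hm
  apply le_antisymm
  · apply sInf_le
    refine ⟨hNmem p, ?_⟩
    exact sInf_le ⟨hNM (hNmem p), hNub p⟩
  · apply le_sInf
    rintro q ⟨hqN, hq⟩
    exact sInf_le ⟨hqN, le_trans (hMub p) hq⟩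
end

section
/- (Theorem 3.1, part (b)) With the setup of the coarse-graining presheaf on a poset P (complete lattices L(V), monotone transitive maps G_{V₂V₁} : L(V₁) → L(V₂)), suppose α assigns to each V and p ∈ L(V) a set of elements ≤ V, and suppose condition (i) holds: V₂ ∈ α_{V₁}(p) iff s(α,V₂) ≤ G_{V₂V₁}(p), where s(α,V) := inf of the truth set of α at V. Then α obeys the functional composition principle: for V₂ ≤ V₁, α_{V₂}(G_{V₂V₁}(p)) equals the pullback of α_{V₁}(p) to V₂, i.e., {V₃ ≤ V₂ : V₃ ∈ α_{V₁}(p)}. -/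
/-- Theorem 3.1(b): with the coarse-graining presheaf setup, condition (i) alone
(`V₂ ∈ α V₁ p` iff `s(α,V₂) ≤ G p`, `s` the infimum of the truth set) implies the
functional composition principle: for `V₂ ≤ V₁`,
`α V₂ (G p)` is the pullback `{V₃ ≤ V₂ : V₃ ∈ α V₁ p}` of `α V₁ p`. -/
theorem valuation_FUNC {P : Type*} [PartialOrder P] {L : P → Type*}
    [∀ V, CompleteLattice (L V)]
    (G : ∀ {V₂ V₁ : P}, V₂ ≤ V₁ → L V₁ → L V₂)
    (hmono : ∀ {V₂ V₁ : P} (h : V₂ ≤ V₁), Monotone (G h))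
    (htrans : ∀ {V₃ V₂ V₁ : P} (h32 : V₃ ≤ V₂) (h21 : V₂ ≤ V₁) (p : L V₁),
      G h32 (G h21 p) = G (h32.trans h21) p)
    (hid : ∀ {V : P} (p : L V), G (le_refl V) p = p)
    (α : ∀ V : P, L V → Set P)
    (hsub : ∀ (V : P) (p : L V), α V p ⊆ Set.Iic V)
    (hi : ∀ {V₂ V₁ : P} (h : V₂ ≤ V₁) (p : L V₁),
      V₂ ∈ α V₁ p ↔ sInf {q : L V₂ | α V₂ q = Set.Iic V₂} ≤ G h p) :
    ∀ {V₂ V₁ : P} (h : V₂ ≤ V₁) (p : L V₁),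
      α V₂ (G h p) = {V₃ | V₃ ≤ V₂ ∧ V₃ ∈ α V₁ p} := by
  intro V₂ V₁ h p
  ext V₃
  simp only [Set.mem_setOf_eq]
  constructor
  · intro hm
    have h32 : V₃ ≤ V₂ := hsub _ _ hm
    refine ⟨h32, ?_⟩
    rw [hi (h32.trans h)]
    rw [hi h32] at hm
    rwa [htrans] at hm
  · rintro ⟨h32, hm⟩
    rw [hi (h32.trans h)] at hm
    rw [hi h32, htrans]
    exact hm
end

section
/- Every global element γ of the coarse-graining presheaf G defines a subobject of the spectral presheaf Σ: if γ(V₂) = G_{V₂V₁}(γ(V₁)) for all V₂ ≤ V₁ (in the abstract setting: L(V) complete lattices of 'projections' acting on sets Σ(V) of lattice homomorphisms κ : L(V) → {0,1}, with restriction of κ along V₂ ≤ V₁ and with κ(p) = 1 implying κ(G_{V₂V₁}(p)) = 1 since p ≤ G_{V₂V₁}(p) in the ambient lattice), then the assignment I^γ(V) := {κ ∈ Σ(V) : κ(γ(V)) = 1} satisfies I^γ(V₁)|_{V₂} ⊆ I^γ(V₂). -/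
/-- Every global element `γ` of the coarse-graining presheaf defines a subobject of
the spectral presheaf: abstractly, with `Σ V` the "spectrum" at stage `V`, an
evaluation `ev V κ p` ("κ(p) = 1") and restriction maps `r`, if restriction carries
truth along coarse-graining (`κ(p) = 1` implies `(κ|_{V₂})(G p) = 1`, since `G` is
inflationary) and `γ V₂ = G (γ V₁)` for `V₂ ≤ V₁`, then
`I^γ(V₁)|_{V₂} ⊆ I^γ(V₂)` where `I^γ(V) := {κ ∈ Σ V : κ(γ V) = 1}`. -/
theorem globalElement_gives_subobject {P : Type*} [PartialOrder P]
    {L : P → Type*} [∀ V, CompleteLattice (L V)] {Sg : P → Type*}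
    (G : ∀ {V₂ V₁ : P}, V₂ ≤ V₁ → L V₁ → L V₂)
    (r : ∀ {V₂ V₁ : P}, V₂ ≤ V₁ → Sg V₁ → Sg V₂)
    (ev : ∀ V : P, Sg V → L V → Prop)
    (hkey : ∀ {V₂ V₁ : P} (h : V₂ ≤ V₁) (κ : Sg V₁) (p : L V₁),
      ev V₁ κ p → ev V₂ (r h κ) (G h p))
    (γ : ∀ V : P, L V)
    (hglobal : ∀ {V₂ V₁ : P} (h : V₂ ≤ V₁), γ V₂ = G h (γ V₁)) :
    ∀ {V₂ V₁ : P} (h : V₂ ≤ V₁),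
      r h '' {κ | ev V₁ κ (γ V₁)} ⊆ {κ' | ev V₂ κ' (γ V₂)} := by
  intro V₂ V₁ h κ' hκ'
  obtain ⟨κ, hκ, rfl⟩ := hκ'
  show ev V₂ (r h κ) (γ V₂)
  rw [hglobal h]
  exact hkey h κ _ hκ
end
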